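/- Let $\nu \in \mathscr{S}$ be a Markov field on $\mathcal{S}^{\mathbb{I}}$ and $(a_n)_{n\geq 1}$ nonnegative reals with $\sum_{n\geq 1} a_n = \infty$. Then for every $s\in\mathbb{S}$, $\nu\left(\sum_{n\geq 1} a_n \mathbf{1}_{\{\mathbb{X}_n = s\}} = \infty\right) = 1$. -/

import Mathlib

set_option linter.unusedSectionVars false
set_option linter.unusedVariables false
set_option maxHeartbeats 1000000


open MeasureTheory ProbabilityTheory Filter Set
open scoped symmDiff

noncomputable section

variable {S : Type*} [Fintype S] [MeasurableSpace S] [MeasurableSingletonClass S]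

/-- The pair variable `𝕏_n = (X_{-n}, X_n)` on the two-sided sequence space `S^ℤ`. -/
def XX (n : ℕ) (x : ℤ → S) : S × S := (x (-(n : ℤ)), x (n : ℤ))

/-- The natural filtration `𝒜_n = σ(X_i : |i| ≤ n)` on `S^ℤ`. -/
def Acal (S : Type*) [MeasurableSpace S] (n : ℕ) : MeasurableSpace (ℤ → S) :=
  MeasurableSpace.comap (fun x (k : {k : ℤ // |k| ≤ (n : ℤ)}) => x (k : ℤ))
    MeasurableSpace.pi

/-- `σ(X_k : |k| < n)`. -/
def innerSA (S : Type*) [MeasurableSpace S] (n : ℤ) : MeasurableSpace (ℤ → S) :=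
  MeasurableSpace.comap (fun x (k : {k : ℤ // |k| < n}) => x (k : ℤ))
    MeasurableSpace.pi

/-- `σ(X_k : |k| > n)`. -/
def outerSA (S : Type*) [MeasurableSpace S] (n : ℤ) : MeasurableSpace (ℤ → S) :=
  MeasurableSpace.comap (fun x (k : {k : ℤ // n < |k|}) => x (k : ℤ))
    MeasurableSpace.pi

/-- The (two-sided) tail σ-algebra `⋂_{n ≥ 1} σ(X_k : |k| > n)`. -/
def tailSA (S : Type*) [MeasurableSpace S] : MeasurableSpace (ℤ → S) :=
  ⨅ n : ℕ, outerSA S ((n : ℤ) + 1)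

/-- `ν` is a Markov field on `S^ℤ`: for every `n ≥ 1`, `σ(X_k : |k| < n)` and
`σ(X_k : |k| > n)` are conditionally independent given `σ(X_k : |k| = n)`, i.e. given each
atom `{(X_{-n}, X_n) = c}`. -/
def IsMarkovField (ν : Measure (ℤ → S)) : Prop :=
  ∀ n : ℤ, 1 ≤ n → ∀ A B : Set (ℤ → S),
    MeasurableSet[innerSA S n] A → MeasurableSet[outerSA S n] B →
    ∀ c : S × S,
      ν (A ∩ B ∩ {x | (x (-n), x n) = c}) * ν {x | (x (-n), x n) = c} =
        ν (A ∩ {x | (x (-n), x n) = c}) * ν (B ∩ {x | (x (-n), x n) = c})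

/-- `f(n,m) = min {|n|, |m|, |n-m|}` (for indices `n, m ≥ 0`). -/
def fmin (p : ℕ × ℕ) : ℕ := min (min p.1 p.2) (Nat.dist p.1 p.2)

/-- The class `𝒮`: `liminf_{f(n,m) → ∞} ν(𝕏_n = s, 𝕏_m = t) > 0` for all `s, t`. -/
def classS (ν : Measure (ℤ → S)) : Prop :=
  ∀ s t : S × S,
    0 < Filter.liminf (fun p : ℕ × ℕ => ν {x | XX p.1 x = s ∧ XX p.2 x = t})
        (Filter.comap fmin Filter.atTop)

/-- The class `ℛ`: `liminf_n ν(𝕏_n = s) > 0` for all `s`. -/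
def classR (ν : Measure (ℤ → S)) : Prop :=
  ∀ s : S × S, 0 < Filter.liminf (fun n : ℕ => ν {x | XX n x = s}) Filter.atTop

lemma comap_subtype_mono {P Q : ℤ → Prop} (h : ∀ k, P k → Q k) :
    MeasurableSpace.comap (fun (x : ℤ → S) (k : {k : ℤ // P k}) => x (k : ℤ))
      MeasurableSpace.pi ≤
    MeasurableSpace.comap (fun (x : ℤ → S) (k : {k : ℤ // Q k}) => x (k : ℤ))
      MeasurableSpace.pi := by
  have heq : (fun (x : ℤ → S) (k : {k : ℤ // P k}) => x (k : ℤ)) =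
      (fun (y : {k : ℤ // Q k} → S) (k : {k : ℤ // P k}) => y ⟨k.1, h k.1 k.2⟩) ∘
      (fun (x : ℤ → S) (k : {k : ℤ // Q k}) => x (k : ℤ)) := rfl
  rw [heq, ← MeasurableSpace.comap_comp]
  exact MeasurableSpace.comap_mono
    (Measurable.comap_le (measurable_pi_lambda _ fun k => measurable_pi_apply _))

lemma comap_subtype_le (P : ℤ → Prop) :
    MeasurableSpace.comap (fun (x : ℤ → S) (k : {k : ℤ // P k}) => x (k : ℤ))
      MeasurableSpace.pi ≤ MeasurableSpace.pi :=
  (measurable_pi_lambda _ fun k => measurable_pi_apply _).comap_le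

lemma Acal_mono {N N' : ℕ} (h : N ≤ N') : Acal S N ≤ Acal S N' :=
  comap_subtype_mono fun k hk => le_trans hk (by exact_mod_cast h)

lemma Acal_le (N : ℕ) : Acal S N ≤ (inferInstance : MeasurableSpace (ℤ → S)) :=
  comap_subtype_le _

lemma Acal_le_innerSA {N : ℕ} {n : ℤ} (h : (N : ℤ) < n) : Acal S N ≤ innerSA S n :=
  comap_subtype_mono fun k hk => lt_of_le_of_lt hk h

lemma measurable_XX (n : ℕ) : Measurable (XX (S := S) n) :=
  (measurable_pi_apply _).prodMk (measurable_pi_apply _)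

lemma measurableSet_XX (n : ℕ) (s : S × S) : MeasurableSet {x : ℤ → S | XX n x = s} :=
  measurable_XX n (measurableSet_singleton s)

lemma outerSA_XX {n : ℤ} {m : ℕ} (h : n < (m : ℤ)) (s : S × S) :
    MeasurableSet[outerSA S n] {x : ℤ → S | XX m x = s} := by
  have h1 : n < |(-(m : ℤ))| := by
    rw [abs_neg]; exact lt_of_lt_of_le h (le_abs_self _)
  have h2 : n < |(m : ℤ)| := lt_of_lt_of_le h (le_abs_self _)
  refine ⟨{y : {k : ℤ // n < |k|} → S | (y ⟨-(m : ℤ), h1⟩, y ⟨(m : ℤ), h2⟩) = s}, ?_, rfl⟩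
  exact (show Measurable (fun y : {k : ℤ // n < |k|} → S =>
      (y ⟨-(m : ℤ), h1⟩, y ⟨(m : ℤ), h2⟩)) from
    (measurable_pi_apply _).prodMk (measurable_pi_apply _)) (measurableSet_singleton s)

lemma iSup_Acal : (⨆ N, Acal S N) = (inferInstance : MeasurableSpace (ℤ → S)) := by
  refine le_antisymm (iSup_le fun N => Acal_le N) ?_
  have : (inferInstance : MeasurableSpace (ℤ → S)) =
      ⨆ k : ℤ, MeasurableSpace.comap (fun x => x k) inferInstance := rfl
  rw [this]
  refine iSup_le fun k => le_trans ?_ (le_iSup _ k.natAbs)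
  have heq : (fun (x : ℤ → S) => x k) =
      (fun (y : {j : ℤ // |j| ≤ (k.natAbs : ℤ)} → S) =>
        y ⟨k, by rw [Int.abs_eq_natAbs]⟩) ∘
      (fun (x : ℤ → S) (j : {j : ℤ // |j| ≤ (k.natAbs : ℤ)}) => x (j : ℤ)) := rfl
  rw [heq, ← MeasurableSpace.comap_comp]
  exact MeasurableSpace.comap_mono (Measurable.comap_le (measurable_pi_apply _))

def cylAlg (S : Type*) [MeasurableSpace S] : Set (Set (ℤ → S)) :=
  ⋃ N, {A | MeasurableSet[Acal S N] A}

lemma isSetAlgebra_cylAlg : IsSetAlgebra (cylAlg S) where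
  empty_mem := mem_iUnion.2 ⟨0, @MeasurableSet.empty _ (Acal S 0)⟩
  compl_mem := by
    rintro s hs
    obtain ⟨N, hN⟩ := mem_iUnion.1 hs
    exact mem_iUnion.2 ⟨N, show MeasurableSet[Acal S N] sᶜ from (show MeasurableSet[Acal S N] s from hN).compl⟩
  union_mem := by
    rintro s t hs ht
    obtain ⟨N, hN⟩ := mem_iUnion.1 hs
    obtain ⟨M, hM⟩ := mem_iUnion.1 ht
    refine mem_iUnion.2 ⟨max N M, show MeasurableSet[Acal S (max N M)] (s ∪ t) from ?_⟩
    exact MeasurableSet.union (Acal_mono (le_max_left N M) _ hN)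
      (Acal_mono (le_max_right N M) _ hM)

lemma generateFrom_cylAlg :
    (inferInstance : MeasurableSpace (ℤ → S)) = MeasurableSpace.generateFrom (cylAlg S) := by
  have h := MeasurableSpace.generateFrom_iUnion_measurableSet (fun N => Acal S N)
  exact iSup_Acal.symm.trans h.symm


lemma partition_XX (ν : Measure (ℤ → S)) (X : Set (ℤ → S)) (hX : MeasurableSet X) (n : ℕ) :
    ν X = ∑ c : S × S, ν (X ∩ {x | XX n x = c}) := by
  have hU : X = ⋃ c : S × S, X ∩ {x | XX n x = c} := by
    ext x
    simp only [mem_iUnion, mem_inter_iff, mem_setOf_eq]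
    exact ⟨fun hx => ⟨XX n x, hx, rfl⟩, fun ⟨c, hc, _⟩ => hc⟩
  rw [← tsum_fintype (L := SummationFilter.unconditional _)]
  conv_lhs => rw [hU]
  exact measure_iUnion
    (fun c c' hcc' => Set.disjoint_left.2 fun x hx hx' => hcc' (hx.2.symm.trans hx'.2))
    (fun c => hX.inter (measurableSet_XX n c))

lemma key (ν : Measure (ℤ → S)) [IsProbabilityMeasure ν] (hMF : IsMarkovField ν)
    (hS : classS ν) {E : Set (ℤ → S)} (hE : MeasurableSet E) (hpos : 0 < ν E) (s : S × S) :
    ∃ β : ENNReal, 0 < β ∧ β ≠ ⊤ ∧ ∃ N₀ : ℕ, ∀ m ≥ N₀, β ≤ ν (E ∩ {x | XX m x = s}) := by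
  classical
  -- step 1: uniform positive lower bounds from class S
  have hcs : ∀ c : S × S, ∃ (ε : ENNReal) (M : ℕ), 0 < ε ∧
      ∀ p : ℕ × ℕ, M ≤ fmin p → ε ≤ ν {x | XX p.1 x = c ∧ XX p.2 x = s} := by
    intro c
    obtain ⟨ε, hε0, hεlt⟩ := exists_between (hS c s)
    have hev : ∀ᶠ p in Filter.comap fmin Filter.atTop,
        ε < ν {x | XX p.1 x = c ∧ XX p.2 x = s} := eventually_lt_of_lt_liminf hεlt
    rw [Filter.eventually_comap] at hev
    obtain ⟨M, hM⟩ := Filter.eventually_atTop.1 hev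
    exact ⟨ε, M, hε0, fun p hp => (hM (fmin p) hp p rfl).le⟩
  choose ε M hε0 hεb using hcs
  set κ : ENNReal := (Finset.univ.inf ε) ⊓ 1 with hκdef
  have hκ0 : 0 < κ := by
    rw [hκdef, lt_inf_iff]
    exact ⟨(Finset.lt_inf_iff (by simp : (0:ENNReal) < ⊤)).2 fun c _ => hε0 c, zero_lt_one⟩
  have hκ1 : κ ≤ 1 := inf_le_right
  have hκtop : κ ≠ ⊤ := (lt_of_le_of_lt hκ1 (by simp)).ne
  have hκε : ∀ c, κ ≤ ε c := fun c =>
    le_trans inf_le_left (Finset.inf_le (Finset.mem_univ c))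
  set M₀ : ℕ := Finset.univ.sup M with hM₀def
  -- step 2: approximation by a cylinder set
  have hmE : ν E ≠ ⊤ := measure_ne_top ν E
  set d : ENNReal := κ * ν E / 8 with hddef
  have hd0 : d ≠ 0 := by
    rw [hddef]
    exact (ENNReal.div_pos (mul_ne_zero hκ0.ne' hpos.ne') (by norm_num)).ne'
  have hdtop : d ≠ ⊤ := by
    rw [hddef]
    exact (ENNReal.div_lt_top (ENNReal.mul_ne_top hκtop hmE) (by norm_num)).ne
  have hdense := Measure.MeasureDense.of_generateFrom_isSetAlgebra_finite (μ := ν)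
    isSetAlgebra_cylAlg generateFrom_cylAlg
  obtain ⟨A, hA𝒜, hAsd⟩ := hdense.approx E hE hmE d.toReal
    (ENNReal.toReal_pos hd0 hdtop)
  rw [ENNReal.ofReal_toReal hdtop] at hAsd
  have hAd : ν (E ∆ A) ≤ d := hAsd.le
  obtain ⟨N, hAN'⟩ := mem_iUnion.1 hA𝒜
  have hAN : MeasurableSet[Acal S N] A := hAN'
  have hAmeas : MeasurableSet A := Acal_le N _ hAN
  -- step 3: choice of the pivot index n and the threshold N₀
  set n : ℕ := max M₀ N + 1 with hndef
  have hNn : (N : ℤ) < (n : ℤ) := by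
    exact_mod_cast Nat.lt_succ_of_le (le_max_right M₀ N)
  have hM₀n : M₀ ≤ n := le_trans (le_max_left M₀ N) (Nat.le_succ _)
  refine ⟨d, pos_iff_ne_zero.2 hd0 |>.trans_le le_rfl |>.trans_le le_rfl, hdtop,
    n + M₀ + 1, fun m hm => ?_⟩
  have hnm : n < m := lt_of_lt_of_le (by omega) hm
  have hfmin : M₀ ≤ fmin (n, m) := by
    have hdist : Nat.dist n m = m - n := Nat.dist_eq_sub_of_le hnm.le
    simp only [fmin, hdist]
    omega
  set B : Set (ℤ → S) := {x | XX m x = s} with hBdef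
  have hBmeas : MeasurableSet B := measurableSet_XX m s
  -- step 4: Markov property estimate
  have hMarkov : ∀ c : S × S,
      κ * ν (A ∩ {x | XX n x = c}) ≤ ν (A ∩ B ∩ {x | XX n x = c}) := by
    intro c
    have h1n : (1 : ℤ) ≤ (n : ℤ) := by exact_mod_cast Nat.one_le_iff_ne_zero.2 (by omega)
    have hmf := hMF (n : ℤ) h1n A B (Acal_le_innerSA hNn _ hAN)
      (outerSA_XX (by exact_mod_cast hnm) s) c
    have hCeq : {x : ℤ → S | (x (-(n : ℤ)), x ((n : ℤ))) = c} = {x | XX n x = c} := rfl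
    rw [hCeq] at hmf
    have hBC : κ ≤ ν (B ∩ {x | XX n x = c}) := by
      have hset : B ∩ {x | XX n x = c} = {x | XX n x = c ∧ XX m x = s} := by
        ext x
        simp only [hBdef, mem_inter_iff, mem_setOf_eq, and_comm]
      rw [hset]
      exact le_trans (hκε c) (hεb c (n, m) (le_trans (Finset.le_sup (Finset.mem_univ c)) hfmin))
    calc κ * ν (A ∩ {x | XX n x = c})
        ≤ ν (A ∩ {x | XX n x = c}) * ν (B ∩ {x | XX n x = c}) := by
          rw [mul_comm]; exact mul_le_mul_right hBC _
      _ = ν (A ∩ B ∩ {x | XX n x = c}) * ν {x | XX n x = c} := hmf.symm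
      _ ≤ ν (A ∩ B ∩ {x | XX n x = c}) * 1 := mul_le_mul_right prob_le_one _
      _ = ν (A ∩ B ∩ {x | XX n x = c}) := mul_one _
  have hAB : κ * ν A ≤ ν (A ∩ B) := by
    rw [partition_XX ν A hAmeas n, partition_XX ν (A ∩ B) (hAmeas.inter hBmeas) n,
      Finset.mul_sum]
    exact Finset.sum_le_sum fun c _ => hMarkov c
  -- step 5: arithmetic
  have h1 : ν (A ∩ B) ≤ ν (E ∩ B) + d := by
    have hsub : A ∩ B ⊆ (E ∩ B) ∪ (E ∆ A) := by
      intro x hx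
      by_cases hxE : x ∈ E
      · exact Or.inl ⟨hxE, hx.2⟩
      · exact Or.inr (Or.inr ⟨hx.1, hxE⟩)
    calc ν (A ∩ B) ≤ ν ((E ∩ B) ∪ (E ∆ A)) := measure_mono hsub
      _ ≤ ν (E ∩ B) + ν (E ∆ A) := measure_union_le _ _
      _ ≤ ν (E ∩ B) + d := add_le_add le_rfl hAd
  have h2 : ν E ≤ ν A + d := by
    have hsub : E ⊆ A ∪ (E ∆ A) := by
      intro x hx
      by_cases hxA : x ∈ A
      · exact Or.inl hxA
      · exact Or.inr (Or.inl ⟨hx, hxA⟩)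
    calc ν E ≤ ν (A ∪ (E ∆ A)) := measure_mono hsub
      _ ≤ ν A + ν (E ∆ A) := measure_union_le _ _
      _ ≤ ν A + d := add_le_add le_rfl hAd
  have hkey : d * 8 ≤ ν (E ∩ B) + d * 2 := by
    have hc : d * 8 = κ * ν E := by
      rw [hddef]
      exact ENNReal.div_mul_cancel (by norm_num) (by norm_num)
    calc d * 8 = κ * ν E := hc
      _ ≤ κ * (ν A + d) := mul_le_mul_right h2 κ
      _ = κ * ν A + κ * d := mul_add κ _ _
      _ ≤ ν (A ∩ B) + κ * d := add_le_add hAB le_rfl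
      _ ≤ (ν (E ∩ B) + d) + κ * d := add_le_add h1 le_rfl
      _ ≤ (ν (E ∩ B) + d) + 1 * d := add_le_add le_rfl (mul_le_mul_left hκ1 d)
      _ = ν (E ∩ B) + d * 2 := by ring
  have hd2top : d * 2 ≠ ⊤ := ENNReal.mul_ne_top hdtop (by norm_num)
  have h6 : d * 6 ≤ ν (E ∩ B) := by
    have : d * 6 + d * 2 ≤ ν (E ∩ B) + d * 2 := by
      calc d * 6 + d * 2 = d * 8 := by ring
        _ ≤ ν (E ∩ B) + d * 2 := hkey
    exact (ENNReal.add_le_add_iff_right hd2top).1 this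
  calc d = d * 1 := (mul_one d).symm
    _ ≤ d * 6 := mul_le_mul_right (by norm_num) d
    _ ≤ ν (E ∩ B) := h6


lemma pigeonhole (ν : Measure (ℤ → S)) [IsProbabilityMeasure ν] (B : ℕ → Set (ℤ → S))
    (hB : ∀ n, MeasurableSet (B n)) (a : ℕ → NNReal) (ha : ∑' n, (a n : ENNReal) = ⊤)
    (β : ENNReal) (hβ0 : 0 < β) (hβtop : β ≠ ⊤) (N₀ : ℕ)
    (hlb : ∀ n, N₀ ≤ n → β ≤ ν (B n)) :
    0 < ν {x | ∑' n, (B n).indicator (fun _ => (a n : ENNReal)) x = ⊤} := by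
  classical
  set T : (ℤ → S) → ENNReal := fun x => ∑' n, (B n).indicator (fun _ => (a n : ENNReal)) x
    with hTdef
  have hTmeas : Measurable T :=
    Measurable.ennreal_tsum fun n => measurable_const.indicator (hB n)
  have hβ2 : β / 2 ≠ 0 := (ENNReal.half_pos hβ0.ne').ne'
  have hβ2top : β / 2 ≠ ⊤ := (ENNReal.div_lt_top hβtop (by norm_num)).ne
  have main : ∀ Mv : ℕ, β / 2 ≤ ν {x | (Mv : ENNReal) ≤ T x} := by
    intro Mv
    set M' : ENNReal := (Mv : ENNReal) / (β / 2) + 1 with hM'def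
    have hM'top : M' ≠ ⊤ := by
      rw [hM'def]
      exact ENNReal.add_ne_top.2 ⟨(ENNReal.div_lt_top (by simp) hβ2).ne, ENNReal.one_ne_top⟩
    set C : ENNReal := ∑ i ∈ Finset.range N₀, (a i : ENNReal) with hCdef
    have hCtop : C ≠ ⊤ := (ENNReal.sum_lt_top.2 fun i _ => ENNReal.coe_lt_top).ne
    have hlt : M' + C < ∑' n, (a n : ENNReal) := by
      rw [ha]
      exact lt_top_iff_ne_top.2 (ENNReal.add_ne_top.2 ⟨hM'top, hCtop⟩)
    rw [ENNReal.tsum_eq_iSup_sum] at hlt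
    obtain ⟨F₀, hF₀⟩ := lt_iSup_iff.1 hlt
    set F : Finset ℕ := F₀ \ Finset.range N₀ with hFdef
    have hFN : ∀ n ∈ F, N₀ ≤ n := by
      intro n hn
      have := (Finset.mem_sdiff.1 hn).2
      simpa using this
    set S₀ : ENNReal := ∑ n ∈ F, (a n : ENNReal) with hS₀def
    have hS₀top : S₀ ≠ ⊤ := (ENNReal.sum_lt_top.2 fun i _ => ENNReal.coe_lt_top).ne
    have hM'S : M' < S₀ := by
      have hsplit : ∑ n ∈ F₀, (a n : ENNReal) ≤ S₀ + C := by
        rw [hS₀def, hCdef]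
        calc ∑ n ∈ F₀, (a n : ENNReal)
            = ∑ n ∈ F₀ ∩ Finset.range N₀, (a n : ENNReal) +
              ∑ n ∈ F₀ \ Finset.range N₀, (a n : ENNReal) :=
              (Finset.sum_inter_add_sum_sdiff _ _ _).symm
          _ ≤ ∑ n ∈ F₀ \ Finset.range N₀, (a n : ENNReal) +
              ∑ i ∈ Finset.range N₀, (a i : ENNReal) := by
              rw [add_comm]
              exact add_le_add le_rfl (Finset.sum_le_sum_of_subset Finset.inter_subset_right)
      have h2 : M' + C < S₀ + C := lt_of_lt_of_le hF₀ hsplit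
      exact lt_of_add_lt_add_right h2
    have hS₀0 : S₀ ≠ 0 := by
      intro h0
      rw [h0] at hM'S
      exact absurd hM'S (by simp)
    have hMle : (Mv : ENNReal) ≤ β / 2 * S₀ := by
      have h1 : (Mv : ENNReal) / (β / 2) ≤ S₀ :=
        le_trans (le_add_right le_rfl) hM'S.le
      have h2 := (ENNReal.div_le_iff_le_mul (Or.inl hβ2) (Or.inl hβ2top)).1 h1
      rwa [mul_comm] at h2
    set g : (ℤ → S) → ENNReal := fun x => ∑ n ∈ F, (B n).indicator (fun _ => (a n : ENNReal)) x
      with hgdef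
    have hgmeas : Measurable g :=
      Finset.measurable_sum F fun n _ => measurable_const.indicator (hB n)
    have hgle : ∀ x, g x ≤ S₀ := fun x =>
      Finset.sum_le_sum fun n _ => Set.indicator_le_self _ _ x
    have hint : ∫⁻ x, g x ∂ν = ∑ n ∈ F, (a n : ENNReal) * ν (B n) := by
      rw [hgdef]
      rw [lintegral_finset_sum _ fun n _ => measurable_const.indicator (hB n)]
      exact Finset.sum_congr rfl fun n _ => lintegral_indicator_const (hB n) _
    have hlow : β * S₀ ≤ ∫⁻ x, g x ∂ν := by
      rw [hint, hS₀def, Finset.mul_sum]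
      refine Finset.sum_le_sum fun n hn => ?_
      calc β * (a n : ENNReal) = (a n : ENNReal) * β := mul_comm _ _
        _ ≤ (a n : ENNReal) * ν (B n) := mul_le_mul_right (hlb n (hFN n hn)) _
    set G : Set (ℤ → S) := {x | β / 2 * S₀ ≤ g x} with hGdef
    have hGmeas : MeasurableSet G := measurableSet_le measurable_const hgmeas
    have hup : ∫⁻ x, g x ∂ν ≤ S₀ * ν G + β / 2 * S₀ := by
      rw [← lintegral_add_compl g hGmeas]
      refine add_le_add ?_ ?_
      · have e1 : ∫⁻ x in G, g x ∂ν ≤ ∫⁻ _ in G, S₀ ∂ν :=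
          setLIntegral_mono measurable_const fun x _ => hgle x
        have e2 : ∫⁻ _ in G, S₀ ∂ν = S₀ * ν G := setLIntegral_const G S₀
        exact e1.trans e2.le
      · have e1 : ∫⁻ x in Gᶜ, g x ∂ν ≤ ∫⁻ _ in Gᶜ, β / 2 * S₀ ∂ν :=
          setLIntegral_mono measurable_const fun x hx => le_of_not_ge hx
        have e2 : ∫⁻ _ in Gᶜ, β / 2 * S₀ ∂ν = β / 2 * S₀ * ν Gᶜ := setLIntegral_const _ _
        have e3 : β / 2 * S₀ * ν Gᶜ ≤ β / 2 * S₀ * 1 := mul_le_mul_right prob_le_one _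
        exact e1.trans (e2.le.trans (e3.trans (mul_one _).le))
    have hνG : β / 2 ≤ ν G := by
      have h8 : β / 2 * S₀ + β / 2 * S₀ ≤ S₀ * ν G + β / 2 * S₀ := by
        have e0 : β / 2 * S₀ + β / 2 * S₀ = β * S₀ := by
          rw [← add_mul, ENNReal.add_halves]
        rw [e0]
        exact hlow.trans hup
      have h9 := (ENNReal.add_le_add_iff_right
        (ENNReal.mul_ne_top hβ2top hS₀top)).1 h8
      rw [mul_comm S₀] at h9
      exact (ENNReal.mul_le_mul_iff_left hS₀0 hS₀top).1 h9
    refine le_trans hνG (measure_mono ?_)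
    intro x hx
    have hgT : g x ≤ T x := ENNReal.sum_le_tsum F
    exact le_trans hMle (le_trans hx hgT)
  have hiInter : {x | T x = ⊤} = ⋂ Mv : ℕ, {x | (Mv : ENNReal) ≤ T x} := by
    ext x
    simp only [mem_setOf_eq, mem_iInter]
    constructor
    · intro h Mv; rw [h]; exact le_top
    · intro h
      by_contra hne
      obtain ⟨Mv, hMv⟩ := ENNReal.exists_nat_gt hne
      exact absurd (h Mv) (not_le.2 hMv)
  have hmeasTop : ∀ Mv : ℕ, NullMeasurableSet {x | (Mv : ENNReal) ≤ T x} ν := fun Mv =>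
    (measurableSet_le measurable_const hTmeas).nullMeasurableSet
  have hdir : Directed (· ⊇ ·) (fun Mv : ℕ => {x | (Mv : ENNReal) ≤ T x}) := by
    intro i j
    refine ⟨max i j, fun x hx => ?_, fun x hx => ?_⟩
    · have hx' : ((max i j : ℕ) : ENNReal) ≤ T x := hx
      exact show ((i : ℕ) : ENNReal) ≤ T x from
        le_trans (Nat.cast_le.2 (le_max_left i j)) hx'
    · have hx' : ((max i j : ℕ) : ENNReal) ≤ T x := hx
      exact show ((j : ℕ) : ENNReal) ≤ T x from
        le_trans (Nat.cast_le.2 (le_max_right i j)) hx'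
  have : 0 < ν {x | T x = ⊤} := by
    rw [hiInter, Directed.measure_iInter hmeasTop hdir ⟨0, measure_ne_top ν _⟩]
    exact lt_of_lt_of_le (ENNReal.half_pos hβ0.ne') (le_iInf main)
  exact this


/-- Almost sure divergence: for a Markov field `ν ∈ 𝒮` and nonnegative reals `(a_n)` with
`∑_{n ≥ 1} a_n = ∞`, for every `s` the series `∑_{n ≥ 1} a_n 1_{𝕏_n = s}` diverges
ν-almost surely. -/
theorem stmt12 (ν : Measure (ℤ → S)) [IsProbabilityMeasure ν]
    (hMF : IsMarkovField ν) (hS : classS ν)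
    (a : ℕ → NNReal) (ha : ∑' n, (a n : ENNReal) = ⊤) :
    ∀ s : S × S,
      ν {x | ∑' n : ℕ, {y | XX (n + 1) y = s}.indicator
          (fun _ => (a n : ENNReal)) x = ⊤} = 1 := by
  intro s
  by_contra hne
  set D : Set (ℤ → S) := {x | ∑' n : ℕ, {y | XX (n + 1) y = s}.indicator
      (fun _ => (a n : ENNReal)) x = ⊤} with hDdef
  have hTmeas : Measurable fun x : ℤ → S =>
      ∑' n : ℕ, {y | XX (n + 1) y = s}.indicator (fun _ => (a n : ENNReal)) x :=
    Measurable.ennreal_tsum fun n => measurable_const.indicator (measurableSet_XX (n + 1) s)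
  have hD : MeasurableSet D := hTmeas (measurableSet_singleton ⊤)
  have hcompl : 0 < ν Dᶜ := by
    rw [pos_iff_ne_zero]
    intro h0
    exact hne ((prob_compl_eq_zero_iff hD).1 h0)
  obtain ⟨β, hβ0, hβtop, N₀, hlb⟩ := key ν hMF hS hD.compl hcompl s
  have hlb' : ∀ n, N₀ ≤ n → β ≤ ν (Dᶜ ∩ {x | XX (n + 1) x = s}) := fun n hn =>
    hlb (n + 1) (le_trans hn (Nat.le_succ n))
  have hpig := pigeonhole ν (fun n => Dᶜ ∩ {x | XX (n + 1) x = s})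
    (fun n => hD.compl.inter (measurableSet_XX (n + 1) s)) a ha β hβ0 hβtop N₀ hlb'
  have hempty : {x | ∑' n : ℕ, (Dᶜ ∩ {y | XX (n + 1) y = s}).indicator
      (fun _ => (a n : ENNReal)) x = ⊤} ⊆ (∅ : Set (ℤ → S)) := by
    intro x hx
    simp only [mem_setOf_eq] at hx
    by_cases hxD : x ∈ Dᶜ
    · have hle : ∀ n : ℕ, (Dᶜ ∩ {y | XX (n + 1) y = s}).indicator
          (fun _ => (a n : ENNReal)) x ≤
          {y | XX (n + 1) y = s}.indicator (fun _ => (a n : ENNReal)) x := fun n =>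
        Set.indicator_le_indicator_of_subset inter_subset_right (fun _ => zero_le) x
      have htop : (⊤ : ENNReal) ≤ ∑' n : ℕ, {y | XX (n + 1) y = s}.indicator
          (fun _ => (a n : ENNReal)) x := by
        rw [← hx]
        exact Summable.tsum_le_tsum hle ENNReal.summable ENNReal.summable
      exact hxD (show x ∈ D from top_le_iff.1 htop)
    · have hzero : ∀ n : ℕ, (Dᶜ ∩ {y | XX (n + 1) y = s}).indicator
          (fun _ => (a n : ENNReal)) x = 0 := fun n =>
        Set.indicator_of_notMem (fun hmem => hxD hmem.1) _
      rw [tsum_congr hzero, tsum_zero] at hx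
      exact absurd hx (by simp)
  have hfin := lt_of_lt_of_le hpig (measure_mono hempty)
  simp at hfin
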